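/- arXiv:1308.4942 — 2 statements merged into one kernel-verified Lean document; each statement's English description precedes it below -/
import Mathlib

section
/- Let L be the combinatorial graph Laplacian of a connected weighted graph G on vertex set V, let V_1 ⊊ V with V_1 and V_1^c nonempty, and let W^red be the reduced weights of the Kron reduction K(L,V_1). Then for distinct vertices i, j ∈ V_1, the reduced weight satisfies W^red_{ij} > 0 if and only if there is a path i = v_0, v_1, …, v_m = j in G (each consecutive pair joined by an edge of positive weight) all of whose vertices belong to {i, j} ∪ V_1^c. -/
open Matrix

noncomputable def deg {n : Type*} [Fintype n] (W : Matrix n n ℝ) (i : n) : ℝ := ∑ j, W i j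

noncomputable def lap {n : Type*} [Fintype n] [DecidableEq n] (W : Matrix n n ℝ) :
    Matrix n n ℝ :=
  Matrix.diagonal (deg W) - W

def IsConn {n : Type*} (W : Matrix n n ℝ) : Prop :=
  ∀ i j : n, Relation.ReflTransGen (fun a b => 0 < W a b) i j

def IsBipartiteWith {n : Type*} (W : Matrix n n ℝ) (V1 : Set n) : Prop :=
  ∀ i j, 0 < W i j → (i ∈ V1 ↔ j ∉ V1)

open Classical in
noncomputable def sortedEigs {n : Type*} [Fintype n] [DecidableEq n] (A : Matrix n n ℝ) :
    Fin (Fintype.card n) → ℝ :=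
  if h : A.IsHermitian then
    (fun i => h.eigenvalues ((Fintype.equivFin n).symm i)) ∘
      ⇑(Tuple.sort fun i => h.eigenvalues ((Fintype.equivFin n).symm i))
  else 0

noncomputable def kron {n : Type*} [Fintype n] [DecidableEq n] (L : Matrix n n ℝ)
    (V1 : Finset n) : Matrix ↥V1 ↥V1 ℝ :=
  L.submatrix (Subtype.val : ↥V1 → n) (Subtype.val : ↥V1 → n) -
    L.submatrix (Subtype.val : ↥V1 → n) (Subtype.val : ↥(V1ᶜ) → n) *
      (L.submatrix (Subtype.val : ↥(V1ᶜ) → n) (Subtype.val : ↥(V1ᶜ) → n))⁻¹ *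
      L.submatrix (Subtype.val : ↥(V1ᶜ) → n) (Subtype.val : ↥V1 → n)

noncomputable def wred {m : Type*} [DecidableEq m] (K : Matrix m m ℝ) : Matrix m m ℝ :=
  Matrix.of fun i j => if i = j then 0 else -K i j


/-!
Let `A = L_{V₁ᶜ,V₁ᶜ}` be the grounded Laplacian. For `i ≠ j` in `V₁` the reduced weight is
`W^red_ij = W_ij + ∑_{a,b ∈ V₁ᶜ} W_ia (A⁻¹)_ab W_bj`, a sum of nonnegative terms: connectivity
makes `A` positive definite, and a positive definite matrix with nonpositive off-diagonal
entries has an entrywise nonnegative inverse, whose entry `(A⁻¹)_ab` is positive exactly when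
`a` and `b` are joined by a path inside `V₁ᶜ`. So `W^red_ij > 0` iff `i ~ j` or
`i ~ a ⇝ b ~ j` with `a ⇝ b` inside `V₁ᶜ`; such a path is what remains of any path through
`{i, j} ∪ V₁ᶜ` after cutting it at its last visit of `i` before its first visit of `j`.
-/

theorem add_pos_iff_of_nonneg {α : Type*} [AddCommMonoid α] [PartialOrder α]
    [IsOrderedAddMonoid α] {a b : α} (ha : 0 ≤ a) (hb : 0 ≤ b) :
    0 < a + b ↔ 0 < a ∨ 0 < b := by
  rw [(add_nonneg ha hb).lt_iff_ne', ha.lt_iff_ne', hb.lt_iff_ne', Ne,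
    add_eq_zero_iff_of_nonneg ha hb, not_and_or]

theorem mul_pos_iff_of_nonneg {α : Type*} [MulZeroClass α] [PartialOrder α] [PosMulMono α]
    [NoZeroDivisors α] {a b : α} (ha : 0 ≤ a) (hb : 0 ≤ b) : 0 < a * b ↔ 0 < a ∧ 0 < b := by
  rw [(mul_nonneg ha hb).lt_iff_ne', ha.lt_iff_ne', hb.lt_iff_ne', mul_ne_zero_iff]

namespace Relation

variable {α : Type*} {r s : α → α → Prop}

theorem reflTransGen_congr_of_ne (h : ∀ a b, a ≠ b → (r a b ↔ s a b)) {a b : α} :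
    ReflTransGen r a b ↔ ReflTransGen s a b := by
  have hrefl : ReflGen r = ReflGen s := by
    ext x y
    rw [reflGen_iff, reflGen_iff]
    rcases eq_or_ne x y with rfl | hxy
    · simp
    · rw [h x y hxy]
  rw [← reflTransGen_reflGen (r := r), ← reflTransGen_reflGen (r := s), hrefl]

theorem reflTransGen_iff_exists_seq {P : α → Prop} {a b : α} (ha : P a) :
    ReflTransGen (fun x y => r x y ∧ P y) a b ↔
      ∃ (m : ℕ) (p : ℕ → α), p 0 = a ∧ p m = b ∧
        (∀ t < m, r (p t) (p (t + 1))) ∧ ∀ t ≤ m, P (p t) := by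
  constructor
  · intro h
    induction h with
    | refl => exact ⟨0, fun _ => a, rfl, rfl, by simp, fun _ _ => ha⟩
    | @tail b c _ hbc ih =>
      obtain ⟨m, p, h0, hm, hr, hP⟩ := ih
      refine ⟨m + 1, Function.update p (m + 1) c, by simp [h0], by simp, fun t ht => ?_,
        fun t ht => ?_⟩
      · rcases Nat.lt_or_ge t m with htm | htm
        · simpa [Function.update_of_ne (by omega : t ≠ m + 1),
            Function.update_of_ne (by omega : t + 1 ≠ m + 1)] using hr t htm
        · obtain rfl : t = m := by omega
          simpa [hm] using hbc.1
      · rcases eq_or_ne t (m + 1) with rfl | htm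
        · simpa using hbc.2
        · simpa [Function.update_of_ne htm] using hP t (by omega)
  · rintro ⟨m, p, rfl, rfl, hr, hP⟩
    suffices ∀ t ≤ m, ReflTransGen (fun x y => r x y ∧ P y) (p 0) (p t) from this m le_rfl
    intro t ht
    induction t with
    | zero => exact .refl
    | succ t ih => exact (ih (by omega)).tail ⟨hr t (by omega), hP (t + 1) ht⟩

theorem reflTransGen_through_iff {C : α → Prop} {i j : α} (hi : ¬C i) (hj : ¬C j)
    (hij : i ≠ j) :
    ReflTransGen (fun x y => r x y ∧ (y = i ∨ y = j ∨ C y)) i j ↔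
      r i j ∨ ∃ a b : {x // C x},
        r i a ∧ ReflTransGen (fun c d : {x // C x} => r c d) a b ∧ r b j := by
  constructor
  · intro h
    -- invariant: either we are done, or we are at `i`, or at a vertex of `C` entered from `i`
    suffices ∀ x, ReflTransGen (fun x y => r x y ∧ (y = i ∨ y = j ∨ C y)) i x →
        (r i j ∨ ∃ a b : {x // C x},
          r i a ∧ ReflTransGen (fun c d : {x // C x} => r c d) a b ∧ r b j) ∨ x = i ∨
        ∃ hx : C x, ∃ a : {x // C x},
          r i a ∧ ReflTransGen (fun c d : {x // C x} => r c d) a ⟨x, hx⟩ by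
      rcases this j h with hdone | rfl | ⟨hx, -⟩
      · exact hdone
      · exact absurd rfl hij
      · exact absurd hx hj
    intro x hx
    induction hx with
    | refl => exact Or.inr (Or.inl rfl)
    | @tail y z _ hyz ih =>
      obtain ⟨hr, rfl | rfl | hz⟩ := hyz
      · exact Or.inr (Or.inl rfl)
      · rcases ih with hdone | rfl | ⟨hy, a, hia, hay⟩
        · exact Or.inl hdone
        · exact Or.inl (Or.inl hr)
        · exact Or.inl (Or.inr ⟨a, ⟨y, hy⟩, hia, hay, hr⟩)
      · rcases ih with hdone | rfl | ⟨hy, a, hia, hay⟩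
        · exact Or.inl hdone
        · exact Or.inr (Or.inr ⟨hz, ⟨z, hz⟩, hr, .refl⟩)
        · exact Or.inr (Or.inr ⟨hz, a, hia, hay.tail (b := ⟨y, hy⟩) hr⟩)
  · rintro (hij | ⟨a, b, hia, hab, hbj⟩)
    · exact .single ⟨hij, Or.inr (Or.inl rfl)⟩
    · have hab' : ReflTransGen (fun x y => r x y ∧ (y = i ∨ y = j ∨ C y)) a b :=
        hab.lift Subtype.val fun c d hcd => ⟨hcd, Or.inr (Or.inr d.2)⟩
      exact (hab'.head ⟨hia, Or.inr (Or.inr a.2)⟩).tail ⟨hbj, Or.inr (Or.inl rfl)⟩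

end Relation

namespace Matrix.PosDef

open Relation

variable {m : Type*} [Fintype m] {A : Matrix m m ℝ}

theorem eq_zero_of_dotProduct_mulVec_nonpos (hA : A.PosDef) {x : m → ℝ}
    (hx : x ⬝ᵥ (A *ᵥ x) ≤ 0) : x = 0 := by
  by_contra hne
  have := hA.dotProduct_mulVec_pos hne
  rw [star_trivial] at this
  linarith

theorem nonneg_of_mulVec_nonneg (hA : A.PosDef) (hZ : ∀ c d, c ≠ d → A c d ≤ 0)
    {x : m → ℝ} (hx : 0 ≤ A *ᵥ x) : 0 ≤ x := by
  set q : m → ℝ := fun c => max (-x c) 0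
  have hq : 0 ≤ q := fun c => le_max_right _ _
  have hxq : 0 ≤ x + q := fun c => by
    simp only [Pi.add_apply, Pi.zero_apply, q]
    linarith [le_max_left (-x c) 0]
  -- `q` and `x + q` are the negative and positive parts of `x`, with disjoint supports
  have hdisj : ∀ c, q c * (x + q) c = 0 := fun c => by
    rcases le_total 0 (x c) with h | h <;> simp [q, h]
  have hcross : q ⬝ᵥ (A *ᵥ (x + q)) ≤ 0 := by
    simp only [dotProduct, mulVec, Finset.mul_sum]
    refine Finset.sum_nonpos fun c _ => Finset.sum_nonpos fun d _ => ?_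
    rcases eq_or_ne c d with rfl | hcd
    · rw [mul_left_comm, hdisj, mul_zero]
    · exact mul_nonpos_of_nonneg_of_nonpos (hq c)
        (mul_nonpos_of_nonpos_of_nonneg (hZ c d hcd) (hxq d))
  have hqq : q ⬝ᵥ (A *ᵥ q) ≤ 0 := by
    have := dotProduct_nonneg_of_nonneg hq hx
    rw [mulVec_add, dotProduct_add] at hcross
    linarith
  intro c
  have := congrFun (hA.eq_zero_of_dotProduct_mulVec_nonpos hqq) c
  simp only [q, Pi.zero_apply, max_eq_right_iff, neg_nonpos] at this
  exact this

variable [DecidableEq m]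

theorem mulVec_col_inv (hA : A.PosDef) (b : m) : A *ᵥ A⁻¹.col b = Pi.single b 1 := by
  rw [← mulVec_single_one, mulVec_mulVec,
    mul_nonsing_inv A ((isUnit_iff_isUnit_det A).1 hA.isUnit), one_mulVec]

theorem inv_apply_nonneg (hA : A.PosDef) (hZ : ∀ c d, c ≠ d → A c d ≤ 0) (a b : m) :
    0 ≤ A⁻¹ a b := by
  have hcol := hA.nonneg_of_mulVec_nonneg hZ (x := A⁻¹.col b)
    (by rw [hA.mulVec_col_inv]; exact Pi.single_nonneg.2 zero_le_one)
  exact hcol a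

theorem inv_apply_pos_of_reflTransGen (hA : A.PosDef) (hZ : ∀ c d, c ≠ d → A c d ≤ 0)
    {a b : m} (h : ReflTransGen (fun c d => A c d < 0) a b) : 0 < A⁻¹ a b := by
  induction h using ReflTransGen.head_induction_on with
  | refl => exact hA.inv.diag_pos
  | @head a c hac _ hc =>
    rcases eq_or_ne a b with rfl | hab
    · exact hA.inv.diag_pos
    by_contra! hle
    have ha : A⁻¹ a b = 0 := le_antisymm hle (hA.inv_apply_nonneg hZ a b)
    -- row `a` of `A * A⁻¹ = 1` is a sum of nonpositive terms, one of which is negative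
    have hrow : ∑ d, A a d * A⁻¹ d b = 0 := by
      simpa [Pi.single_apply, hab, mulVec, dotProduct] using congrFun (hA.mulVec_col_inv b) a
    have hterms : ∀ d ∈ Finset.univ, A a d * A⁻¹ d b ≤ 0 := fun d _ => by
      rcases eq_or_ne a d with rfl | had
      · rw [ha, mul_zero]
      · exact mul_nonpos_of_nonpos_of_nonneg (hZ a d had) (hA.inv_apply_nonneg hZ d b)
    exact (mul_neg_of_neg_of_pos hac hc).ne
      ((Finset.sum_eq_zero_iff_of_nonpos hterms).1 hrow c (Finset.mem_univ c))

theorem inv_apply_eq_zero_of_not_reflTransGen (hA : A.PosDef)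
    (hZ : ∀ c d, c ≠ d → A c d ≤ 0) {a b : m}
    (h : ¬ReflTransGen (fun c d => A c d < 0) a b) : A⁻¹ a b = 0 := by
  classical
  set R := ReflTransGen (fun c d => A c d < 0) a
  set x := A⁻¹.col b
  -- the restriction of the column `x` to the component of `a` is annihilated by `A`
  set y : m → ℝ := fun c => if R c then x c else 0
  have hAy : ∀ c, R c → (A *ᵥ y) c = 0 := by
    intro c hc
    have hcb : c ≠ b := by rintro rfl; exact h hc
    calc (A *ᵥ y) c = (A *ᵥ x) c := by
          refine Finset.sum_congr rfl fun d _ => ?_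
          by_cases hd : R d
          · simp [y, hd]
          · have hcd : A c d = 0 := le_antisymm (hZ c d (by rintro rfl; exact hd hc))
              (not_lt.1 fun hlt => hd (hc.tail hlt))
            simp [hcd]
      _ = 0 := by simp [x, hA.mulVec_col_inv, hcb]
  have hy : y = 0 := hA.eq_zero_of_dotProduct_mulVec_nonpos <| le_of_eq <|
    Finset.sum_eq_zero fun c _ => by
      by_cases hc : R c
      · simp [hAy c hc]
      · simp [y, hc]
  have hya : y a = x a := if_pos ReflTransGen.refl
  simpa [hy, x] using hya.symm

theorem inv_apply_pos_iff (hA : A.PosDef) (hZ : ∀ c d, c ≠ d → A c d ≤ 0) {a b : m} :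
    0 < A⁻¹ a b ↔ ReflTransGen (fun c d => A c d < 0) a b :=
  ⟨fun hpos => by_contra fun h => hpos.ne' (hA.inv_apply_eq_zero_of_not_reflTransGen hZ h),
    hA.inv_apply_pos_of_reflTransGen hZ⟩

end Matrix.PosDef

theorem Matrix.dotProduct_submatrix_mulVec {m n R : Type*} [Fintype m] [Fintype n]
    [CommSemiring R] (M : Matrix n n R) {e : m → n} (he : Function.Injective e) (x : m → R) :
    x ⬝ᵥ (M.submatrix e e *ᵥ x) = Function.extend e x 0 ⬝ᵥ (M *ᵥ Function.extend e x 0) := by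
  set y := Function.extend e x 0
  have hy : ∀ i ∉ Set.range e, y i = 0 := fun i hi => Function.extend_apply' _ _ _ hi
  have hye : ∀ c, y (e c) = x c := he.extend_apply x 0
  have hMy : ∀ i, (M *ᵥ y) i = ∑ d, M i (e d) * x d := fun i =>
    (Fintype.sum_of_injective e he _ _ (fun j hj => by simp [hy j hj]) fun d => by
      rw [hye]).symm
  exact Fintype.sum_of_injective e he _ _ (fun i hi => by simp [hy i hi]) fun c => by
    rw [hye, hMy]; rfl

section Laplacian

variable {n : Type*} [Fintype n] [DecidableEq n] {W : Matrix n n ℝ}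

theorem lap_apply_of_ne (W : Matrix n n ℝ) {i j : n} (h : i ≠ j) : lap W i j = -W i j := by
  simp [lap, diagonal_apply_ne _ h]

theorem isHermitian_lap (hW : W.IsSymm) : (lap W).IsHermitian :=
  isHermitian_iff_isSymm.2 ((isSymm_diagonal _).sub hW)

theorem lap_mulVec_apply (x : n → ℝ) (i : n) :
    (lap W *ᵥ x) i = ∑ j, W i j * (x i - x j) := by
  simp only [lap, sub_mulVec, Pi.sub_apply, mulVec_diagonal, deg, Finset.sum_mul, mul_sub,
    Finset.sum_sub_distrib]
  rfl

theorem dotProduct_lap_mulVec (hW : W.IsSymm) (x : n → ℝ) :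
    x ⬝ᵥ (lap W *ᵥ x) = (∑ i, ∑ j, W i j * (x i - x j) ^ 2) / 2 := by
  have hform : x ⬝ᵥ (lap W *ᵥ x) = ∑ i, ∑ j, W i j * (x i ^ 2 - x i * x j) := by
    simp only [dotProduct, lap_mulVec_apply, Finset.mul_sum]
    exact Finset.sum_congr rfl fun i _ => Finset.sum_congr rfl fun j _ => by ring
  have hswap : ∑ i, ∑ j, W i j * (x i ^ 2 - x i * x j) =
      ∑ i, ∑ j, W i j * (x j ^ 2 - x j * x i) := by
    rw [Finset.sum_comm]
    exact Finset.sum_congr rfl fun i _ => Finset.sum_congr rfl fun j _ => by rw [hW.apply]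
  have hsplit : ∑ i, ∑ j, W i j * (x i - x j) ^ 2 =
      ∑ i, ∑ j, W i j * (x i ^ 2 - x i * x j) + ∑ i, ∑ j, W i j * (x j ^ 2 - x j * x i) := by
    simp only [← Finset.sum_add_distrib]
    exact Finset.sum_congr rfl fun i _ => Finset.sum_congr rfl fun j _ => by ring
  rw [hform, hsplit, ← hswap]
  ring

theorem dotProduct_lap_mulVec_pos (hW : W.IsSymm) (hnonneg : ∀ i j, 0 ≤ W i j)
    (hconn : IsConn W) {x : n → ℝ} (hx : x ≠ 0) {k : n} (hk : x k = 0) :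
    0 < x ⬝ᵥ (lap W *ᵥ x) := by
  have hterm : ∀ i j, 0 ≤ W i j * (x i - x j) ^ 2 := fun i j =>
    mul_nonneg (hnonneg i j) (sq_nonneg _)
  rw [dotProduct_lap_mulVec hW]
  refine div_pos ?_ two_pos
  by_contra! hle
  have hsum : ∑ i, ∑ j, W i j * (x i - x j) ^ 2 = 0 :=
    le_antisymm hle (Finset.sum_nonneg fun i _ => Finset.sum_nonneg fun j _ => hterm i j)
  have hedge : ∀ i j, 0 < W i j → x i = x j := fun i j hij => by
    have hrows := (Fintype.sum_eq_zero_iff_of_nonneg fun i =>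
      Finset.sum_nonneg fun j _ => hterm i j).1 hsum
    have hij0 := congrFun ((Fintype.sum_eq_zero_iff_of_nonneg (hterm i)).1 (congrFun hrows i)) j
    simpa [hij.ne', sub_eq_zero] using hij0
  apply hx
  funext i
  induction hconn k i with
  | refl => exact hk
  | tail _ hstep ih => exact (hedge _ _ hstep) ▸ ih

noncomputable def groundedLap (W : Matrix n n ℝ) (s : Finset n) : Matrix ↥sᶜ ↥sᶜ ℝ :=
  (lap W).submatrix Subtype.val Subtype.val

theorem groundedLap_apply_of_ne {s : Finset n} {c d : ↥sᶜ} (h : c ≠ d) :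
    groundedLap W s c d = -W c d :=
  lap_apply_of_ne W (Subtype.val_injective.ne h)

theorem groundedLap_apply_nonpos_of_ne (hnonneg : ∀ i j, 0 ≤ W i j) {s : Finset n}
    (c d : ↥sᶜ) (h : c ≠ d) : groundedLap W s c d ≤ 0 := by
  rw [groundedLap_apply_of_ne h]
  exact neg_nonpos.2 (hnonneg _ _)

theorem posDef_groundedLap (hW : W.IsSymm) (hnonneg : ∀ i j, 0 ≤ W i j) (hconn : IsConn W)
    {s : Finset n} (hs : s.Nonempty) : (groundedLap W s).PosDef := by
  refine PosDef.of_dotProduct_mulVec_pos ((isHermitian_lap hW).submatrix _) fun x hx => ?_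
  obtain ⟨k, hk⟩ := hs
  rw [star_trivial, groundedLap, dotProduct_submatrix_mulVec _ Subtype.val_injective]
  refine dotProduct_lap_mulVec_pos hW hnonneg hconn (k := k) ?_ ?_
  · intro h
    apply hx
    funext c
    simpa [Subtype.val_injective.extend_apply] using congrFun h c.1
  · exact Function.extend_apply' _ _ _ (by rintro ⟨c, rfl⟩; exact Finset.mem_compl.1 c.2 hk)

theorem inv_groundedLap_apply_pos_iff (hW : W.IsSymm) (hnonneg : ∀ i j, 0 ≤ W i j)
    (hconn : IsConn W) {s : Finset n} (hs : s.Nonempty) {a b : ↥sᶜ} :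
    0 < (groundedLap W s)⁻¹ a b ↔ Relation.ReflTransGen (fun c d : ↥sᶜ => 0 < W c d) a b :=
  ((posDef_groundedLap hW hnonneg hconn hs).inv_apply_pos_iff
    (groundedLap_apply_nonpos_of_ne hnonneg)).trans <|
      Relation.reflTransGen_congr_of_ne fun c d hcd => by
        rw [groundedLap_apply_of_ne hcd, neg_lt_zero]

end Laplacian

section KronReduction

open Relation

variable {n : Type*} [Fintype n] [DecidableEq n] {W : Matrix n n ℝ}

theorem kron_apply (L : Matrix n n ℝ) (s : Finset n) (i j : ↥s) :
    kron L s i j = L i j - ∑ a : ↥sᶜ, ∑ b : ↥sᶜ,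
      L i a * (L.submatrix Subtype.val Subtype.val)⁻¹ a b * L b j := by
  simp only [kron, Matrix.sub_apply, mul_apply, submatrix_apply, Finset.sum_mul]
  rw [Finset.sum_comm]

theorem wred_kron_lap_apply {s : Finset n} {i j : ↥s} (hij : i ≠ j) :
    wred (kron (lap W) s) i j =
      W i j + ∑ a : ↥sᶜ, ∑ b : ↥sᶜ, W i a * (groundedLap W s)⁻¹ a b * W b j := by
  have hne : ∀ (i : ↥s) (a : ↥sᶜ), (i : n) ≠ a := fun i a h => Finset.mem_compl.1 a.2 (h ▸ i.2)
  simp only [wred, of_apply, if_neg hij, kron_apply,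
    lap_apply_of_ne W (Subtype.val_injective.ne hij), lap_apply_of_ne W (hne _ _),
    lap_apply_of_ne W (hne _ _).symm, groundedLap, neg_mul, mul_neg, neg_neg]
  ring

theorem wred_kron_lap_pos_iff (hW : W.IsSymm) (hnonneg : ∀ i j, 0 ≤ W i j)
    (hconn : IsConn W) {s : Finset n} {i j : ↥s} (hij : i ≠ j) :
    0 < wred (kron (lap W) s) i j ↔ 0 < W i j ∨ ∃ a b : ↥sᶜ,
      0 < W i a ∧ ReflTransGen (fun c d : ↥sᶜ => 0 < W c d) a b ∧ 0 < W b j := by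
  have hA := posDef_groundedLap hW hnonneg hconn ⟨i, i.2⟩
  have hG := hA.inv_apply_nonneg (groundedLap_apply_nonpos_of_ne hnonneg)
  have hpos : ∀ a b : ↥sᶜ, 0 < W i a * (groundedLap W s)⁻¹ a b * W b j ↔
      0 < W i a ∧ ReflTransGen (fun c d : ↥sᶜ => 0 < W c d) a b ∧ 0 < W b j := fun a b => by
    rw [mul_pos_iff_of_nonneg (mul_nonneg (hnonneg _ _) (hG a b)) (hnonneg _ _),
      mul_pos_iff_of_nonneg (hnonneg _ _) (hG a b),
      inv_groundedLap_apply_pos_iff hW hnonneg hconn ⟨i, i.2⟩, and_assoc]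
  have hterm : ∀ a b : ↥sᶜ, 0 ≤ W i a * (groundedLap W s)⁻¹ a b * W b j := fun a b =>
    mul_nonneg (mul_nonneg (hnonneg _ _) (hG a b)) (hnonneg _ _)
  rw [wred_kron_lap_apply hij, add_pos_iff_of_nonneg (hnonneg _ _)
      (Finset.sum_nonneg fun a _ => Finset.sum_nonneg fun b _ => hterm a b),
    Finset.sum_pos_iff_of_nonneg fun a _ => Finset.sum_nonneg fun b _ => hterm a b]
  simp only [Finset.sum_pos_iff_of_nonneg fun b _ => hterm _ b, Finset.mem_univ, true_and, hpos]

end KronReduction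

theorem kron_reduction_edge_iff_path_general
    {N : ℕ} (W : Matrix (Fin N) (Fin N) ℝ)
    (hsymm : W.IsSymm) (hnonneg : ∀ i j, 0 ≤ W i j)
    (hconn : IsConn W) (V1 : Finset (Fin N)) :
    ∀ i j : ↥V1, i ≠ j →
      (0 < wred (kron (lap W) V1) i j ↔
        ∃ (m : ℕ) (p : ℕ → Fin N), p 0 = i.1 ∧ p m = j.1 ∧
          (∀ t < m, 0 < W (p t) (p (t + 1))) ∧
          (∀ t ≤ m, p t = i.1 ∨ p t = j.1 ∨ p t ∈ V1ᶜ)) := by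
  intro i j hij
  have hi : i.1 ∉ V1ᶜ := Finset.notMem_compl.2 i.2
  have hj : j.1 ∉ V1ᶜ := Finset.notMem_compl.2 j.2
  have hpath := Relation.reflTransGen_through_iff (r := fun x y => 0 < W x y)
    (C := (· ∈ V1ᶜ)) hi hj (Subtype.val_injective.ne hij)
  exact (wred_kron_lap_pos_iff hsymm hnonneg hconn hij).trans <|
    hpath.symm.trans (Relation.reflTransGen_iff_exists_seq (Or.inl rfl))

/-- For distinct kept vertices `i, j ∈ V1`, the reduced weight of the Kron reduction is
positive iff there is a positive-weight path from `i` to `j` in the original graph all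
of whose vertices lie in `{i, j} ∪ V1ᶜ`. -/
theorem kron_reduction_edge_iff_path
    {N : ℕ} (W : Matrix (Fin N) (Fin N) ℝ)
    (hsymm : W.IsSymm) (hnonneg : ∀ i j, 0 ≤ W i j) (hdiag : ∀ i, W i i = 0)
    (hconn : IsConn W) (V1 : Finset (Fin N)) (h1 : V1.Nonempty) (h2 : V1ᶜ.Nonempty) :
    ∀ i j : ↥V1, i ≠ j →
      (0 < wred (kron (lap W) V1) i j ↔
        ∃ (m : ℕ) (p : ℕ → Fin N), p 0 = i.1 ∧ p m = j.1 ∧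
          (∀ t < m, 0 < W (p t) (p (t + 1))) ∧
          (∀ t ≤ m, p t = i.1 ∨ p t = j.1 ∨ p t ∈ V1ᶜ)) :=
  kron_reduction_edge_iff_path_general W hsymm hnonneg hconn V1
end

section
/- Let L be the combinatorial graph Laplacian of a connected weighted graph on vertex set V, and let V_1 ⊊ V with V_1 and V_1^c nonempty and |V_1| ≥ 2. Then Kron reduction preserves resistance distances: for all i, j ∈ V_1, (δ_i − δ_j)ᵀ L† (δ_i − δ_j) = (δ_i − δ_j)ᵀ (K(L,V_1))† (δ_i − δ_j), where L† and (K(L,V_1))† denote Moore–Penrose pseudoinverses and δ_i is the standard basis vector supported at vertex i (indexed within V_1 on the right-hand side). -/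
open Matrix

open Classical in
/-- The Moore–Penrose pseudoinverse of a real matrix (defined via its characterizing
Penrose equations). -/
noncomputable def pinv {m n : Type*} [Fintype m] [Fintype n] (A : Matrix m n ℝ) :
    Matrix n m ℝ :=
  if h : ∃ X : Matrix n m ℝ,
      A * X * A = A ∧ X * A * X = X ∧ (A * X)ᵀ = A * X ∧ (X * A)ᵀ = X * A then
    h.choose
  else 0

/-!
Let `e = δᵢ - δⱼ`. For a symmetric `A` with `A A⁺ A = A` and any `x` with `A x = e`, one has
`e ⬝ A⁺ e = (A x) ⬝ A⁺ A x = x ⬝ A x = e ⬝ x`, which for this `e` is `xᵢ - xⱼ`. For the Laplacian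
such an `x` exists because `e` is orthogonal to `ker L`, the constants of the connected graph.
Since `e` vanishes off `V₁`, eliminating the unknowns on `V₁ᶜ` from `L x = e` (the block
`L_{V₁ᶜ,V₁ᶜ}` is invertible, again by connectivity) gives `K(L,V₁) x|_{V₁} = e|_{V₁}`, so the same
identity for the symmetric matrix `K(L,V₁)` returns the same value `xᵢ - xⱼ`. Pseudoinverses of
symmetric matrices exist by the spectral theorem: invert the nonzero eigenvalues.
-/

section MoorePenrose

variable {m n : Type*} [Fintype m] [Fintype n]

def IsMoorePenroseInverse (A : Matrix m n ℝ) (X : Matrix n m ℝ) : Prop :=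
  A * X * A = A ∧ X * A * X = X ∧ (A * X)ᵀ = A * X ∧ (X * A)ᵀ = X * A

lemma isMoorePenroseInverse_pinv_of_exists {A : Matrix m n ℝ}
    (h : ∃ X, IsMoorePenroseInverse A X) : IsMoorePenroseInverse A (pinv A) := by
  unfold IsMoorePenroseInverse at h ⊢
  rw [pinv, dif_pos h]
  exact h.choose_spec

omit [Fintype n] in
lemma isSelfAdjoint_iff_isSymm {A : Matrix n n ℝ} : IsSelfAdjoint A ↔ A.IsSymm := by
  rw [IsSelfAdjoint, star_eq_conjTranspose, conjTranspose_eq_transpose_of_trivial]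
  rfl

variable [DecidableEq n]

/-- Take `X = cfc (·⁻¹) A`: since `0⁻¹ = 0`, the identities `x x⁻¹ x = x` and `x⁻¹ x x⁻¹ = x⁻¹`
hold on the whole spectrum, zero included. -/
lemma Matrix.IsSymm.exists_isMoorePenroseInverse {A : Matrix n n ℝ} (hA : A.IsSymm) :
    ∃ X, IsMoorePenroseInverse A X := by
  have hsa : IsSelfAdjoint A := isSelfAdjoint_iff_isSymm.2 hA
  have hmul (f g : ℝ → ℝ) : cfc f A * cfc g A = cfc (fun x => f x * g x) A :=
    (cfc_mul f g A (finite_real_spectrum.continuousOn f)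
      (finite_real_spectrum.continuousOn g)).symm
  have hsymm (f : ℝ → ℝ) : (cfc f A)ᵀ = cfc f A :=
    (isSelfAdjoint_iff_isSymm.1 (cfc_predicate f A)).eq
  have hid : cfc (fun x : ℝ => x) A = A := cfc_id' ℝ A
  have hAX : A * cfc (fun x : ℝ => x⁻¹) A = cfc (fun x : ℝ => x * x⁻¹) A := by rw [← hmul, hid]
  have hXA : cfc (fun x : ℝ => x⁻¹) A * A = cfc (fun x : ℝ => x⁻¹ * x) A := by rw [← hmul, hid]
  refine ⟨cfc (fun x : ℝ => x⁻¹) A, ?_, ?_, hAX ▸ hsymm _, hXA ▸ hsymm _⟩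
  · calc A * cfc (fun x : ℝ => x⁻¹) A * A
          = cfc (fun x : ℝ => x * x⁻¹) A * cfc (fun x => x) A := by rw [hAX, hid]
      _ = A := by rw [hmul]; simp only [mul_inv_mul_cancel, hid]
  · rw [hXA, hmul]
    congr 1 with x
    simpa using mul_inv_mul_cancel x⁻¹

lemma Matrix.IsSymm.isMoorePenroseInverse_pinv {A : Matrix n n ℝ} (hA : A.IsSymm) :
    IsMoorePenroseInverse A (pinv A) :=
  isMoorePenroseInverse_pinv_of_exists hA.exists_isMoorePenroseInverse

end MoorePenrose

section Symmetric

variable {n R : Type*} [Fintype n] [CommSemiring R] {A X : Matrix n n R}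

lemma Matrix.IsSymm.dotProduct_mulVec_comm (hA : A.IsSymm) (x y : n → R) :
    x ⬝ᵥ (A *ᵥ y) = y ⬝ᵥ (A *ᵥ x) := by
  rw [← dotProduct_transpose_mulVec, hA.eq]

lemma Matrix.IsSymm.dotProduct_mulVec_of_mulVec_eq (hA : A.IsSymm) (hX : A * X * A = A)
    {x e : n → R} (hx : A *ᵥ x = e) : e ⬝ᵥ (X *ᵥ e) = e ⬝ᵥ x := by
  subst hx
  rw [dotProduct_comm, hA.dotProduct_mulVec_comm, mulVec_mulVec, mulVec_mulVec, hX,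
    dotProduct_comm]

/-- `e - A X e` lies in the kernel of `A` and is orthogonal to it, hence vanishes. -/
lemma IsMoorePenroseInverse.mulVec_mulVec_eq_self {A X : Matrix n n ℝ} (hA : A.IsSymm)
    (hX : IsMoorePenroseInverse A X) {e : n → ℝ} (he : ∀ v, A *ᵥ v = 0 → v ⬝ᵥ e = 0) :
    A *ᵥ (X *ᵥ e) = e := by
  obtain ⟨hAXA, -, hAX, -⟩ := hX
  have hAAX : A * (A * X) = A :=
    calc A * (A * X) = (A * X * A)ᵀ := by rw [transpose_mul, hAX, hA.eq]
      _ = A := by rw [hAXA, hA.eq]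
  obtain ⟨p, hp_def⟩ : ∃ p, p = e - A *ᵥ (X *ᵥ e) := ⟨_, rfl⟩
  have hp : A *ᵥ p = 0 := by
    rw [hp_def, mulVec_sub, mulVec_mulVec, mulVec_mulVec, Matrix.mul_assoc, hAAX, sub_self]
  have hpp : p ⬝ᵥ p = 0 :=
    calc p ⬝ᵥ p = p ⬝ᵥ e - p ⬝ᵥ (A *ᵥ (X *ᵥ e)) := by nth_rw 2 [hp_def]; rw [dotProduct_sub]
      _ = 0 := by rw [he p hp, hA.dotProduct_mulVec_comm, hp, dotProduct_zero, sub_zero]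
  have hp0 := dotProduct_self_eq_zero.1 hpp
  rw [hp_def, sub_eq_zero] at hp0
  exact hp0.symm

end Symmetric

lemma single_sub_single_dotProduct {n R : Type*} [Fintype n] [DecidableEq n] [Ring R]
    (i j : n) (x : n → R) : (Pi.single i 1 - Pi.single j 1) ⬝ᵥ x = x i - x j := by
  rw [sub_dotProduct, single_dotProduct, single_dotProduct, one_mul, one_mul]

section Laplacian

variable {n : Type*} [Fintype n] [DecidableEq n] {W : Matrix n n ℝ}

lemma lap_isSymm (hW : W.IsSymm) : (lap W).IsSymm := by
  rw [IsSymm, lap, transpose_sub, diagonal_transpose, hW.eq]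

lemma two_mul_dotProduct_lap_mulVec (hW : W.IsSymm) (x : n → ℝ) :
    2 * (x ⬝ᵥ (lap W *ᵥ x)) = ∑ i, ∑ j, W i j * (x i - x j) ^ 2 := by
  have hquad : x ⬝ᵥ (lap W *ᵥ x) = ∑ i, ∑ j, W i j * (x i ^ 2 - x i * x j) := by
    rw [lap, sub_mulVec, dotProduct_sub]
    simp only [dotProduct, mulVec_diagonal]
    simp only [mulVec, dotProduct, deg, Finset.mul_sum, Finset.sum_mul, ← Finset.sum_sub_distrib]
    exact Finset.sum_congr rfl fun i _ => Finset.sum_congr rfl fun j _ => by ring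
  have hswap : ∑ i, ∑ j, W i j * (x i ^ 2 - x i * x j)
      = ∑ i, ∑ j, W i j * (x j ^ 2 - x j * x i) := by
    rw [Finset.sum_comm]
    simp only [hW.apply]
  rw [two_mul, hquad]
  nth_rw 2 [hswap]
  rw [← Finset.sum_add_distrib]
  exact Finset.sum_congr rfl fun i _ => by
    rw [← Finset.sum_add_distrib]
    exact Finset.sum_congr rfl fun j _ => by ring

lemma eq_of_dotProduct_lap_mulVec_eq_zero (hW : W.IsSymm) (hnonneg : ∀ i j, 0 ≤ W i j)
    (hconn : IsConn W) {x : n → ℝ} (hx : x ⬝ᵥ (lap W *ᵥ x) = 0) (i j : n) : x i = x j := by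
  have hterm_nonneg (i j : n) : 0 ≤ W i j * (x i - x j) ^ 2 :=
    mul_nonneg (hnonneg i j) (sq_nonneg _)
  have hsum : ∑ i, ∑ j, W i j * (x i - x j) ^ 2 = 0 := by
    rw [← two_mul_dotProduct_lap_mulVec hW, hx, mul_zero]
  have hrow := (Fintype.sum_eq_zero_iff_of_nonneg fun i =>
    Finset.sum_nonneg fun j _ => hterm_nonneg i j).1 hsum
  have hterm (i j : n) : W i j * (x i - x j) ^ 2 = 0 :=
    congrFun ((Fintype.sum_eq_zero_iff_of_nonneg (hterm_nonneg i)).1 (congrFun hrow i)) j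
  have hadj (a b : n) (hab : 0 < W a b) : x a = x b := by
    have := (mul_eq_zero.1 (hterm a b)).resolve_left hab.ne'
    exact sub_eq_zero.1 (pow_eq_zero_iff two_ne_zero |>.1 this)
  induction hconn i j with
  | refl => rfl
  | tail _ hbc ih => exact ih.trans (hadj _ _ hbc)

lemma eq_of_lap_mulVec_eq_zero (hW : W.IsSymm) (hnonneg : ∀ i j, 0 ≤ W i j)
    (hconn : IsConn W) {x : n → ℝ} (hx : lap W *ᵥ x = 0) (i j : n) : x i = x j :=
  eq_of_dotProduct_lap_mulVec_eq_zero hW hnonneg hconn (by rw [hx, dotProduct_zero]) i j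

end Laplacian

section Blocks

variable {n : Type*} [Fintype n] [DecidableEq n]

lemma dotProduct_eq_add_comp_val {R : Type*} [NonUnitalNonAssocSemiring R] (V1 : Finset n)
    (u w : n → R) :
    u ⬝ᵥ w = (u ∘ Subtype.val : V1 → R) ⬝ᵥ (w ∘ Subtype.val)
      + (u ∘ Subtype.val : ↥V1ᶜ → R) ⬝ᵥ (w ∘ Subtype.val) := by
  simp only [dotProduct, Function.comp_apply]
  rw [Finset.sum_coe_sort V1 fun k => u k * w k, Finset.sum_coe_sort V1ᶜ fun k => u k * w k,
    Finset.sum_add_sum_compl]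

lemma mulVec_comp_eq_add_submatrix {m R : Type*} [NonUnitalNonAssocSemiring R]
    (L : Matrix n n R) (V1 : Finset n) (f : m → n) (x : n → R) :
    (L *ᵥ x) ∘ f = L.submatrix f (Subtype.val : V1 → n) *ᵥ (x ∘ Subtype.val)
      + L.submatrix f (Subtype.val : ↥V1ᶜ → n) *ᵥ (x ∘ Subtype.val) := by
  funext a
  exact dotProduct_eq_add_comp_val V1 (L (f a)) x

lemma kron_mulVec_comp_val (L : Matrix n n ℝ) (V1 : Finset n)
    (hdet : IsUnit (L.submatrix (Subtype.val : ↥V1ᶜ → n) Subtype.val).det)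
    {x e : n → ℝ} (hx : L *ᵥ x = e) (he : ∀ a ∉ V1, e a = 0) :
    kron L V1 *ᵥ (x ∘ Subtype.val) = e ∘ Subtype.val := by
  have he' : e ∘ (Subtype.val : ↥V1ᶜ → n) = 0 := funext fun b => he b (Finset.mem_compl.1 b.2)
  have hinterior :
      L.submatrix (Subtype.val : ↥V1ᶜ → n) Subtype.val *ᵥ (x ∘ (Subtype.val : ↥V1ᶜ → n))
        = -(L.submatrix (Subtype.val : ↥V1ᶜ → n) Subtype.val *ᵥ
            (x ∘ (Subtype.val : V1 → n))) := by
    have hblock := mulVec_comp_eq_add_submatrix L V1 (Subtype.val : ↥V1ᶜ → n) x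
    rw [hx, he'] at hblock
    exact eq_neg_of_add_eq_zero_right hblock.symm
  have hsolve : (L.submatrix (Subtype.val : ↥V1ᶜ → n) Subtype.val)⁻¹ *ᵥ
      (L.submatrix (Subtype.val : ↥V1ᶜ → n) Subtype.val *ᵥ (x ∘ (Subtype.val : V1 → n)))
      = -(x ∘ Subtype.val) := by
    rw [← neg_neg (L.submatrix _ _ *ᵥ _), ← hinterior, mulVec_neg, mulVec_mulVec,
      nonsing_inv_mul _ hdet, one_mulVec]
  rw [kron, sub_mulVec, Matrix.mul_assoc, ← mulVec_mulVec, ← mulVec_mulVec, hsolve,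
    mulVec_neg, sub_neg_eq_add, ← mulVec_comp_eq_add_submatrix, hx]

lemma kron_isSymm {L : Matrix n n ℝ} (hL : L.IsSymm) (V1 : Finset n) :
    (kron L V1).IsSymm := by
  rw [IsSymm, kron, transpose_sub, transpose_mul, transpose_mul, transpose_submatrix,
    transpose_submatrix, transpose_submatrix, transpose_nonsing_inv, transpose_submatrix, hL.eq,
    Matrix.mul_assoc]

/-- A kernel vector of the block on `V1ᶜ`, extended by zero, has zero Laplacian energy, so it is
constant, and it vanishes on `V1 ≠ ∅`. -/
lemma isUnit_det_lap_submatrix_compl {W : Matrix n n ℝ} (hW : W.IsSymm)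
    (hnonneg : ∀ i j, 0 ≤ W i j) (hconn : IsConn W) {V1 : Finset n} (hV1 : V1.Nonempty) :
    IsUnit ((lap W).submatrix (Subtype.val : ↥V1ᶜ → n) Subtype.val).det := by
  rw [isUnit_iff_ne_zero]
  intro hdet
  obtain ⟨v, hv, hLv⟩ := exists_mulVec_eq_zero_iff.2 hdet
  set y : n → ℝ := fun a => if h : a ∈ V1ᶜ then v ⟨a, h⟩ else 0
  have hy : y ∘ (Subtype.val : V1 → n) = 0 :=
    funext fun a => dif_neg (Finset.notMem_compl.2 a.2)
  have hy' : y ∘ (Subtype.val : ↥V1ᶜ → n) = v := funext fun b => dif_pos b.2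
  have hLy : (lap W *ᵥ y) ∘ (Subtype.val : ↥V1ᶜ → n) = 0 := by
    rw [mulVec_comp_eq_add_submatrix _ V1, hy, hy', mulVec_zero, zero_add, hLv]
  have hq : y ⬝ᵥ (lap W *ᵥ y) = 0 := by
    rw [dotProduct_eq_add_comp_val V1, hy, hLy, zero_dotProduct, dotProduct_zero, add_zero]
  obtain ⟨a, ha⟩ := hV1
  refine hv (funext fun b => ?_)
  calc v b = y b := (congrFun hy' b).symm
    _ = y a := eq_of_dotProduct_lap_mulVec_eq_zero hW hnonneg hconn hq b a
    _ = 0 := congrFun hy ⟨a, ha⟩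

end Blocks

theorem kron_reduction_preserves_resistance_distance_general
    {N : ℕ} (W : Matrix (Fin N) (Fin N) ℝ)
    (hsymm : W.IsSymm) (hnonneg : ∀ i j, 0 ≤ W i j)
    (hconn : IsConn W) (V1 : Finset (Fin N)) :
    ∀ i j : ↥V1,
      (Pi.single i.1 (1 : ℝ) - Pi.single j.1 1) ⬝ᵥ
          (pinv (lap W) *ᵥ (Pi.single i.1 (1 : ℝ) - Pi.single j.1 1)) =
        (Pi.single i (1 : ℝ) - Pi.single j 1) ⬝ᵥ
          (pinv (kron (lap W) V1) *ᵥ (Pi.single i (1 : ℝ) - Pi.single j 1)) := by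
  intro i j
  have hL := lap_isSymm hsymm
  have hK := kron_isSymm hL V1
  set e : Fin N → ℝ := Pi.single i.1 1 - Pi.single j.1 1 with he
  have hLx : lap W *ᵥ (pinv (lap W) *ᵥ e) = e :=
    hL.isMoorePenroseInverse_pinv.mulVec_mulVec_eq_self hL fun v hv => by
      rw [dotProduct_comm, he, single_sub_single_dotProduct,
        eq_of_lap_mulVec_eq_zero hsymm hnonneg hconn hv i j, sub_self]
  have he_compl : ∀ a ∉ V1, e a = 0 := fun a ha => by
    rw [he, Pi.sub_apply, Pi.single_eq_of_ne (ne_of_mem_of_not_mem i.2 ha).symm,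
      Pi.single_eq_of_ne (ne_of_mem_of_not_mem j.2 ha).symm, sub_zero]
  have he_val : e ∘ Subtype.val = Pi.single i 1 - Pi.single j 1 := by
    funext a
    simp only [he, Function.comp_apply, Pi.sub_apply, Pi.single_apply, Subtype.ext_iff]
  have hKx := kron_mulVec_comp_val (lap W) V1
    (isUnit_det_lap_submatrix_compl hsymm hnonneg hconn ⟨i, i.2⟩) hLx he_compl
  rw [he_val] at hKx
  rw [hL.dotProduct_mulVec_of_mulVec_eq hL.isMoorePenroseInverse_pinv.1 hLx,
    hK.dotProduct_mulVec_of_mulVec_eq hK.isMoorePenroseInverse_pinv.1 hKx, he,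
    single_sub_single_dotProduct, single_sub_single_dotProduct]
  rfl

/-- Kron reduction preserves resistance distances between kept vertices. -/
theorem kron_reduction_preserves_resistance_distance
    {N : ℕ} (W : Matrix (Fin N) (Fin N) ℝ)
    (hsymm : W.IsSymm) (hnonneg : ∀ i j, 0 ≤ W i j) (hdiag : ∀ i, W i i = 0)
    (hconn : IsConn W) (V1 : Finset (Fin N)) (hcard : 2 ≤ V1.card) (h2 : V1ᶜ.Nonempty) :
    ∀ i j : ↥V1,
      (Pi.single i.1 (1 : ℝ) - Pi.single j.1 1) ⬝ᵥ
          (pinv (lap W) *ᵥ (Pi.single i.1 (1 : ℝ) - Pi.single j.1 1)) =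
        (Pi.single i (1 : ℝ) - Pi.single j 1) ⬝ᵥ
          (pinv (kron (lap W) V1) *ᵥ (Pi.single i (1 : ℝ) - Pi.single j 1)) :=
  kron_reduction_preserves_resistance_distance_general W hsymm hnonneg hconn V1
end
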